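/- Let ρ and τ be nonzero real numbers. Suppose (Γ, d) is a first order differential calculus on X satisfying, for all k, l ∈ {1, …, N}: dz_k·z_l = q⁻¹ Σ_{a,b} (R⁻¹)^{ab}_{kl} z_a·dz_b − q⁻²(ρ/τ)(s̃ρ−1) z_k z_l·θ₊ − (ρ/τ)(s̃τ−q²) z_k z_l·θ₋; dz*_k·z*_l = q Σ_{a,b} R̄^{ab}_{kl} z*_a·dz*_b − (τ/ρ)(s̃ρ−1) z*_k z*_l·θ₊ − q²(τ/ρ)(s̃τ−q²) z*_k z*_l·θ₋; dz_k·z*_l = q Σ_{a,b} (R←⁻¹)^{ab}_{kl} z*_a·dz_b − q⁻²ρ q^{2k} δ_{kl} θ₊ − τ q^{2k} δ_{kl} θ₋ + (sρ−1) z_k z*_l·θ₊ + q²(sτ−1) z_k z*_l·θ₋; dz*_k·z_l = q⁻¹ Σ_{a,b} (R→)^{ab}_{kl} z_a·dz*_b − q^{2N−2}ρ δ_{kl} θ₊ − q^{2N}τ δ_{kl} θ₋ + (sρ−1) z*_k z_l·θ₊ + q²(sτ−1) z*_k z_l·θ₋. Suppose moreover that θ₊ + q²(τ/ρ) θ₋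 = 0 in Γ. Then, with λ := q²τ/ρ, the following structure equations hold for all k, l ∈ {1, …, N}: dz_k·z_l = q⁻¹ Σ_{a,b} (R⁻¹)^{ab}_{kl} z_a·dz_b − λ⁻¹(q⁴λ⁻¹−1) z_k z_l·θ₊; dz*_k·z*_l = q Σ_{a,b} R̄^{ab}_{kl} z*_a·dz*_b − q⁻²λ(q⁴λ⁻¹−1) z*_k z*_l·θ₊; dz_k·z*_l = q Σ_{a,b} (R←⁻¹)^{ab}_{kl} z*_a·dz_b + (q²λ⁻¹−1) z_k z*_l·θ₊; dz*_k·z_l = q⁻¹ Σ_{a,b} (R→)^{ab}_{kl} z_a·dz*_b + (q²λ⁻¹−1) z*_k z_l·θ₊. -/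

import Mathlib

/-! The relation `θ₊ + λθ₋ = 0` with `λ ≠ 0` gives `θ₋ = -λ⁻¹θ₊`, hence `x·θ₋ = -λ⁻¹ x·θ₊` for every
`x`. Substituting this into the structure equations of `Γ'''_{ρτ}`, the `s̃`- and `s`-dependence
of the coefficients cancels for `λ = q²τ/ρ`, and so do the isolated `δ_{kl}θ±` terms. -/

noncomputable section

open scoped BigOperators

namespace QSphere

/-- Generator index set: `Sum.inl i` stands for `z_{i+1}`, `Sum.inr i` for `z*_{i+1}`. -/
abbrev GenIdx (N : ℕ) := Fin N ⊕ Fin N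

/-- The free unital `ℂ`-algebra on the `2N` generators. -/
abbrev FA (N : ℕ) := FreeAlgebra ℂ (GenIdx N)

/-- The generator `z_{i+1}` of the free algebra. -/
def zf {N : ℕ} (i : Fin N) : FA N := FreeAlgebra.ι ℂ (Sum.inl i)

/-- The generator `z*_{i+1}` of the free algebra. -/
def zsf {N : ℕ} (i : Fin N) : FA N := FreeAlgebra.ι ℂ (Sum.inr i)

/-- `q` viewed as a complex number. -/
def qc (q : ℝ) : ℂ := (q : ℂ)

/-- `Q = q - q⁻¹` as a complex number. -/
def Qc (q : ℝ) : ℂ := qc q - (qc q)⁻¹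

/-- The (1-based) integer index of `i : Fin N`. -/
def exZ {N : ℕ} (i : Fin N) : ℤ := (i : ℕ) + 1

/-- The defining relations of the quantum sphere `S_q^{2N-1}`:
the two-sided ideal generated by the listed elements is divided out. -/
inductive SphereRel (N : ℕ) (q : ℝ) : FA N → FA N → Prop
  | zz {i j : Fin N} (h : i < j) :
      SphereRel N q (zf i * zf j) (qc q • (zf j * zf i))
  | ss {i j : Fin N} (h : i < j) :
      SphereRel N q (zsf i * zsf j) ((qc q)⁻¹ • (zsf j * zsf i))
  | zs {i j : Fin N} (h : i ≠ j) :
      SphereRel N q (zf i * zsf j) (qc q • (zsf j * zf i))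
  | qcomm (i : Fin N) :
      SphereRel N q
        (zf i * zsf i - zsf i * zf i
          + ((qc q)⁻¹ * Qc q) • ∑ k ∈ Finset.univ.filter (fun k => i < k), zf k * zsf k)
        0
  | sphere : SphereRel N q (∑ i, zf i * zsf i) 1

/-- The quantum sphere `S_q^{2N-1}`. -/
abbrev X (N : ℕ) (q : ℝ) := RingQuot (SphereRel N q)

/-- The generator `z_{i+1}` of the quantum sphere. -/
def Z (N : ℕ) (q : ℝ) (i : Fin N) : X N q := RingQuot.mkAlgHom ℂ (SphereRel N q) (zf i)

/-- The generator `z*_{i+1}` of the quantum sphere. -/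
def Zs (N : ℕ) (q : ℝ) (i : Fin N) : X N q := RingQuot.mkAlgHom ℂ (SphereRel N q) (zsf i)

/-- The R-matrix coefficient `R^{ij}_{kl}`. -/
def Rm (q : ℝ) {N : ℕ} (i j k l : Fin N) : ℂ :=
  if i = l ∧ j = k ∧ i ≠ j then 1
  else if i = j ∧ j = k ∧ k = l then qc q
  else if i = k ∧ j = l ∧ i < j then Qc q
  else 0

/-- The inverse R-matrix coefficient `(R⁻¹)^{ij}_{kl}`. -/
def Rinv (q : ℝ) {N : ℕ} (i j k l : Fin N) : ℂ :=
  if i = l ∧ j = k ∧ i ≠ j then 1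
  else if i = j ∧ j = k ∧ k = l then (qc q)⁻¹
  else if i = k ∧ j = l ∧ j < i then -(Qc q)
  else 0

/-- `R̄^{ij}_{kl} = R^{lk}_{ji}`. -/
def Rbar (q : ℝ) {N : ℕ} (i j k l : Fin N) : ℂ := Rm q l k j i

/-- `(R̄⁻¹)^{ij}_{kl} = (R⁻¹)^{lk}_{ji}`. -/
def Rbarinv (q : ℝ) {N : ℕ} (i j k l : Fin N) : ℂ := Rinv q l k j i

/-- `(R→)^{ij}_{kl} = R^{ki}_{lj}`. -/
def Rright (q : ℝ) {N : ℕ} (i j k l : Fin N) : ℂ := Rm q k i l j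

/-- `(R←⁻¹)^{ij}_{kl} = q^{2l-2i} (R⁻¹)^{jl}_{ik}`. -/
def Rlinv (q : ℝ) {N : ℕ} (i j k l : Fin N) : ℂ :=
  qc q ^ (2 * exZ l - 2 * exZ i) * Rinv q j l i k

/-- `s = Σ_{i=0}^{N-1} q^{2i}`. -/
def sP (N : ℕ) (q : ℝ) : ℂ := ∑ i ∈ Finset.range N, qc q ^ (2 * i)

/-- `s̃ = Σ_{i=1}^{N-1} q^{2i}`. -/
def sT (N : ℕ) (q : ℝ) : ℂ := ∑ i ∈ Finset.Ico 1 N, qc q ^ (2 * i)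

/-- Kronecker delta. -/
def kdelta {N : ℕ} (k l : Fin N) : ℂ := if k = l then 1 else 0


/-- The data of a candidate first order differential calculus on the quantum
sphere: an `X`-bimodule `Γ` (axioms are stated separately in `IsFODC`)
together with a differential map `d`. -/
structure PreCalc (N : ℕ) (q : ℝ) where
  Γ : Type
  [instAdd : AddCommGroup Γ]
  [instMod : Module ℂ Γ]
  lact : X N q → Γ → Γ
  ract : Γ → X N q → Γ
  d : X N q → Γ

attribute [instance] PreCalc.instAdd PreCalc.instMod

namespace PreCalc

variable {N : ℕ} {q : ℝ}

/-- `(Γ, d)` is a first order differential calculus on `X = S_q^{2N-1}`: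
`Γ` is an `X`-bimodule (left and right module structures commuting with each
other and compatible with the `ℂ`-scalar multiplication), `d` is `ℂ`-linear
and satisfies the Leibniz rule. -/
def IsFODC (D : PreCalc N q) : Prop :=
  (∀ (x : X N q) (ω η : D.Γ), D.lact x (ω + η) = D.lact x ω + D.lact x η) ∧
  (∀ (x y : X N q) (ω : D.Γ), D.lact (x + y) ω = D.lact x ω + D.lact y ω) ∧
  (∀ (x y : X N q) (ω : D.Γ), D.lact (x * y) ω = D.lact x (D.lact y ω)) ∧
  (∀ ω : D.Γ, D.lact 1 ω = ω) ∧
  (∀ (c : ℂ) (x : X N q) (ω : D.Γ), D.lact (c • x) ω = c • D.lact x ω) ∧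
  (∀ (c : ℂ) (x : X N q) (ω : D.Γ), D.lact x (c • ω) = c • D.lact x ω) ∧
  (∀ (ω η : D.Γ) (x : X N q), D.ract (ω + η) x = D.ract ω x + D.ract η x) ∧
  (∀ (ω : D.Γ) (x y : X N q), D.ract ω (x + y) = D.ract ω x + D.ract ω y) ∧
  (∀ (ω : D.Γ) (x y : X N q), D.ract ω (x * y) = D.ract (D.ract ω x) y) ∧
  (∀ ω : D.Γ, D.ract ω 1 = ω) ∧
  (∀ (c : ℂ) (ω : D.Γ) (x : X N q), D.ract (c • ω) x = c • D.ract ω x) ∧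
  (∀ (c : ℂ) (ω : D.Γ) (x : X N q), D.ract ω (c • x) = c • D.ract ω x) ∧
  (∀ (x : X N q) (ω : D.Γ) (y : X N q), D.ract (D.lact x ω) y = D.lact x (D.ract ω y)) ∧
  (∀ x y : X N q, D.d (x + y) = D.d x + D.d y) ∧
  (∀ (c : ℂ) (x : X N q), D.d (c • x) = c • D.d x) ∧
  (∀ x y : X N q, D.d (x * y) = D.ract (D.d x) y + D.lact x (D.d y))

/-- `dz_i`. -/
def dz (D : PreCalc N q) (i : Fin N) : D.Γ := D.d (Z N q i)

/-- `dz*_i`. -/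
def dzs (D : PreCalc N q) (i : Fin N) : D.Γ := D.d (Zs N q i)

/-- The invariant one-form `θ₊ = Σ_i z_i·dz*_i`. -/
def thP (D : PreCalc N q) : D.Γ := ∑ i, D.lact (Z N q i) (D.dzs i)

/-- The invariant one-form `θ₋ = Σ_i q^{-2i} z*_i·dz_i`. -/
def thM (D : PreCalc N q) : D.Γ :=
  ∑ i, (qc q ^ (-(2 * exZ i))) • D.lact (Zs N q i) (D.dz i)

/-- `Σ_{a,b} (R⁻¹)^{ab}_{kl} z_a·dz_b`. -/
def SRinv (D : PreCalc N q) (k l : Fin N) : D.Γ :=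
  ∑ a, ∑ b, Rinv q a b k l • D.lact (Z N q a) (D.dz b)

/-- `Σ_{a,b} R̄^{ab}_{kl} z*_a·dz*_b`. -/
def SRbar (D : PreCalc N q) (k l : Fin N) : D.Γ :=
  ∑ a, ∑ b, Rbar q a b k l • D.lact (Zs N q a) (D.dzs b)

/-- `Σ_{a,b} (R←⁻¹)^{ab}_{kl} z*_a·dz_b`. -/
def SRlinv (D : PreCalc N q) (k l : Fin N) : D.Γ :=
  ∑ a, ∑ b, Rlinv q a b k l • D.lact (Zs N q a) (D.dz b)

/-- `Σ_{a,b} (R→)^{ab}_{kl} z_a·dz*_b`. -/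
def SRright (D : PreCalc N q) (k l : Fin N) : D.Γ :=
  ∑ a, ∑ b, Rright q a b k l • D.lact (Z N q a) (D.dzs b)

/-- `z_k·dz_l`. -/
def lzdz (D : PreCalc N q) (k l : Fin N) : D.Γ := D.lact (Z N q k) (D.dz l)
/-- `z*_k·dz*_l`. -/
def lzsdzs (D : PreCalc N q) (k l : Fin N) : D.Γ := D.lact (Zs N q k) (D.dzs l)
/-- `z_k·dz*_l`. -/
def lzdzs (D : PreCalc N q) (k l : Fin N) : D.Γ := D.lact (Z N q k) (D.dzs l)
/-- `z*_k·dz_l`. -/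
def lzsdz (D : PreCalc N q) (k l : Fin N) : D.Γ := D.lact (Zs N q k) (D.dz l)

/-- `z_k z_l·θ₊`. -/
def zzP (D : PreCalc N q) (k l : Fin N) : D.Γ := D.lact (Z N q k * Z N q l) D.thP
/-- `z_k z_l·θ₋`. -/
def zzM (D : PreCalc N q) (k l : Fin N) : D.Γ := D.lact (Z N q k * Z N q l) D.thM
/-- `z*_k z*_l·θ₊`. -/
def zszsP (D : PreCalc N q) (k l : Fin N) : D.Γ := D.lact (Zs N q k * Zs N q l) D.thP
/-- `z*_k z*_l·θ₋`. -/
def zszsM (D : PreCalc N q) (k l : Fin N) : D.Γ := D.lact (Zs N q k * Zs N q l) D.thM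
/-- `z_k z*_l·θ₊`. -/
def zzsP (D : PreCalc N q) (k l : Fin N) : D.Γ := D.lact (Z N q k * Zs N q l) D.thP
/-- `z_k z*_l·θ₋`. -/
def zzsM (D : PreCalc N q) (k l : Fin N) : D.Γ := D.lact (Z N q k * Zs N q l) D.thM
/-- `z*_k z_l·θ₊`. -/
def zszP (D : PreCalc N q) (k l : Fin N) : D.Γ := D.lact (Zs N q k * Z N q l) D.thP
/-- `z*_k z_l·θ₋`. -/
def zszM (D : PreCalc N q) (k l : Fin N) : D.Γ := D.lact (Zs N q k * Z N q l) D.thM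

/-- `dz_1,…,dz_N,dz*_1,…,dz*_N` form a free basis of `Γ` as a left `X`-module. -/
def FreeBasis (D : PreCalc N q) : Prop :=
  (∀ ω : D.Γ, ∃ a b : Fin N → X N q,
      ω = ∑ i, D.lact (a i) (D.dz i) + ∑ i, D.lact (b i) (D.dzs i)) ∧
  (∀ a b : Fin N → X N q,
      ∑ i, D.lact (a i) (D.dz i) + ∑ i, D.lact (b i) (D.dzs i) = 0 →
      ∀ i, a i = 0 ∧ b i = 0)

/-- The relation `θ₊ + λ θ₋ = 0` holds in `Γ`. -/
def RelHolds (D : PreCalc N q) (lam : ℂ) : Prop := D.thP + lam • D.thM = 0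

/-- `dz_1,…,dz*_N` generate `Γ` as a left `X`-module and all left-module
relations between them are exactly the ones generated by `θ₊ + λ θ₋ = 0`. -/
def GenRel (D : PreCalc N q) (lam : ℂ) : Prop :=
  (∀ ω : D.Γ, ∃ a b : Fin N → X N q,
      ω = ∑ i, D.lact (a i) (D.dz i) + ∑ i, D.lact (b i) (D.dzs i)) ∧
  (∀ a b : Fin N → X N q,
      (∑ i, D.lact (a i) (D.dz i) + ∑ i, D.lact (b i) (D.dzs i) = 0 ↔
        ∃ c : X N q, ∀ i, a i = (lam * qc q ^ (-(2 * exZ i))) • (c * Zs N q i)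
          ∧ b i = c * Z N q i)) ∧
  D.RelHolds lam

/-- The one-form `μ θ₊ + λ θ₋`. -/
def theta0 (D : PreCalc N q) (mu lam : ℂ) : D.Γ := mu • D.thP + lam • D.thM

/-- `c • ω` (scalar multiple of a one-form). -/
def smulG (D : PreCalc N q) (c : ℂ) (ω : D.Γ) : D.Γ := c • ω

/-- The one-form `θ₀` quasi-commutes with all generators of `X`. -/
def QuasiComm (D : PreCalc N q) (θ₀ : D.Γ) : Prop :=
  ∀ m : Fin N, ∃ c c' : ℂ,
    D.ract θ₀ (Z N q m) = c • D.lact (Z N q m) θ₀ ∧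
    D.ract θ₀ (Zs N q m) = c' • D.lact (Zs N q m) θ₀

/-- The calculus is inner with generating one-form `θ`. -/
def Inner (D : PreCalc N q) (θ : D.Γ) : Prop :=
  ∀ x : X N q, D.d x = D.ract θ x - D.lact x θ

/-- Structure equations of the calculus `Γ_{ατ}`. -/
def EqAT (D : PreCalc N q) (α τ : ℝ) : Prop :=
  ∀ k l : Fin N,
    D.ract (D.dz k) (Z N q l) =
        (qc q * (α:ℂ)) • D.SRinv k l
        + (qc q ^ 2 * (α:ℂ) - 1) • D.lzdz k l
        + (qc q ^ 2 * (α:ℂ) ^ 2 * (1 - sT N q * (τ:ℂ))) • D.zzP k l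
        + (qc q ^ 2 * (1 - (α:ℂ) * sT N q * (τ:ℂ))) • D.zzM k l
    ∧ D.ract (D.dzs k) (Zs N q l) =
        ((qc q)⁻¹ * (α:ℂ)⁻¹) • D.SRbar k l
        + (qc q ^ (-2:ℤ) * (α:ℂ)⁻¹ - 1) • D.lzsdzs k l
        + (1 - sT N q * (τ:ℂ)) • D.zszsP k l
        + ((α:ℂ)⁻¹ ^ 2 * (1 - (α:ℂ) * sT N q * (τ:ℂ))) • D.zszsM k l
    ∧ D.ract (D.dz k) (Zs N q l) =
        ((qc q)⁻¹ * (α:ℂ)⁻¹) • D.SRlinv k l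
        + (qc q ^ 2 * (α:ℂ) - 1) • D.lzdzs k l
        - (qc q ^ 2 * (α:ℂ) * (1 - sP N q * (τ:ℂ))) • D.zzsP k l
        - ((α:ℂ) * (τ:ℂ) * qc q ^ (2 * exZ k) * kdelta k l) • D.thP
        - ((α:ℂ)⁻¹ * (1 - qc q ^ 2 * (α:ℂ) * sP N q * (τ:ℂ))) • D.zzsM k l
        - ((τ:ℂ) * qc q ^ (2 * exZ k) * kdelta k l) • D.thM
    ∧ D.ract (D.dzs k) (Z N q l) =
        (qc q * (α:ℂ)) • D.SRright k l
        + (qc q ^ (-2:ℤ) * (α:ℂ)⁻¹ - 1) • D.lzsdz k l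
        - (qc q ^ 2 * (α:ℂ) * (1 - sP N q * (τ:ℂ))) • D.zszP k l
        - ((α:ℂ) * (τ:ℂ) * kdelta k l) • D.thP
        - ((α:ℂ)⁻¹ * (1 - qc q ^ 2 * (α:ℂ) * sP N q * (τ:ℂ))) • D.zszM k l
        - ((τ:ℂ) * kdelta k l) • D.thM

/-- Structure equations of the calculus `Γ'_{αω}`. -/
def EqAP (D : PreCalc N q) (α ω : ℝ) : Prop :=
  ∀ k l : Fin N,
    D.ract (D.dz k) (Z N q l) =
        (qc q * (α:ℂ)) • D.SRinv k l
        + (qc q ^ 2 * (α:ℂ) - 1) • D.lzdz k l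
        + (ω:ℂ) • D.zzP k l
        + ((α:ℂ)⁻¹ * (ω:ℂ) - qc q ^ 2 * ((α:ℂ) - 1)) • D.zzM k l
    ∧ D.ract (D.dzs k) (Zs N q l) =
        ((qc q)⁻¹ * (α:ℂ)⁻¹) • D.SRbar k l
        + (qc q ^ (-2:ℤ) * (α:ℂ)⁻¹ - 1) • D.lzsdzs k l
        + (qc q ^ 2 * (α:ℂ) * (ω:ℂ)⁻¹ - ((α:ℂ)⁻¹ - 1)) • D.zszsP k l
        + (qc q ^ 2 * (ω:ℂ)⁻¹) • D.zszsM k l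
    ∧ D.ract (D.dz k) (Zs N q l) =
        ((qc q)⁻¹ * (α:ℂ)⁻¹) • D.SRlinv k l
        + (qc q ^ 2 * (α:ℂ) - 1) • D.lzdzs k l
        - (qc q ^ 2 * (α:ℂ)) • D.zzsP k l
        - (α:ℂ)⁻¹ • D.zzsM k l
    ∧ D.ract (D.dzs k) (Z N q l) =
        (qc q * (α:ℂ)) • D.SRright k l
        + (qc q ^ (-2:ℤ) * (α:ℂ)⁻¹ - 1) • D.lzsdz k l
        - (qc q ^ 2 * (α:ℂ)) • D.zszP k l
        - (α:ℂ)⁻¹ • D.zszM k l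

/-- Structure equations of the calculus `Γ''_{ωψ}`. -/
def EqPP (D : PreCalc N q) (ω ψ : ℝ) : Prop :=
  ∀ k l : Fin N,
    D.ract (D.dz k) (Z N q l) =
        (qc q)⁻¹ • D.SRinv k l
        + (ω:ℂ) • D.zzP k l
        + (qc q ^ 2 * (ω:ℂ) * (ψ:ℂ) - 1) • D.zzM k l
    ∧ D.ract (D.dzs k) (Zs N q l) =
        qc q • D.SRbar k l
        + ((ψ:ℂ) - qc q ^ 2) • D.zszsP k l
        + (qc q ^ 2 * (ω:ℂ)⁻¹) • D.zszsM k l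
    ∧ D.ract (D.dz k) (Zs N q l) =
        qc q • D.SRlinv k l
        - D.zzsP k l
        - (qc q ^ 2:ℂ) • D.zzsM k l
    ∧ D.ract (D.dzs k) (Z N q l) =
        (qc q)⁻¹ • D.SRright k l
        - D.zszP k l
        - (qc q ^ 2:ℂ) • D.zszM k l

/-- Structure equations of the calculus `Γ'''_{ρτ}`. -/
def EqPPP (D : PreCalc N q) (ρ τ : ℝ) : Prop :=
  ∀ k l : Fin N,
    D.ract (D.dz k) (Z N q l) =
        (qc q)⁻¹ • D.SRinv k l
        - (qc q ^ (-2:ℤ) * ((ρ:ℂ) / (τ:ℂ)) * (sT N q * (ρ:ℂ) - 1)) • D.zzP k l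
        - (((ρ:ℂ) / (τ:ℂ)) * (sT N q * (τ:ℂ) - qc q ^ 2)) • D.zzM k l
    ∧ D.ract (D.dzs k) (Zs N q l) =
        qc q • D.SRbar k l
        - (((τ:ℂ) / (ρ:ℂ)) * (sT N q * (ρ:ℂ) - 1)) • D.zszsP k l
        - (qc q ^ 2 * ((τ:ℂ) / (ρ:ℂ)) * (sT N q * (τ:ℂ) - qc q ^ 2)) • D.zszsM k l
    ∧ D.ract (D.dz k) (Zs N q l) =
        qc q • D.SRlinv k l
        - (qc q ^ (-2:ℤ) * (ρ:ℂ) * qc q ^ (2 * exZ k) * kdelta k l) • D.thP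
        - ((τ:ℂ) * qc q ^ (2 * exZ k) * kdelta k l) • D.thM
        + (sP N q * (ρ:ℂ) - 1) • D.zzsP k l
        + (qc q ^ 2 * (sP N q * (τ:ℂ) - 1)) • D.zzsM k l
    ∧ D.ract (D.dzs k) (Z N q l) =
        (qc q)⁻¹ • D.SRright k l
        - (qc q ^ (2 * (N:ℤ) - 2) * (ρ:ℂ) * kdelta k l) • D.thP
        - (qc q ^ (2 * (N:ℤ)) * (τ:ℂ) * kdelta k l) • D.thM
        + (sP N q * (ρ:ℂ) - 1) • D.zszP k l
        + (qc q ^ 2 * (sP N q * (τ:ℂ) - 1)) • D.zszM k l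

/-- Structure equations of the calculus `Γ̃_λ`. -/
def EqTl (D : PreCalc N q) (lam : ℂ) : Prop :=
  ∀ k l : Fin N,
    D.ract (D.dz k) (Z N q l) =
        (qc q * lam⁻¹) • D.SRinv k l
        + (qc q ^ 2 * lam⁻¹ - 1) • D.lzdz k l
        + (qc q ^ 2 * lam⁻¹ * (lam⁻¹ - 1)) • D.zzP k l
    ∧ D.ract (D.dzs k) (Zs N q l) =
        ((qc q)⁻¹ * lam) • D.SRbar k l
        + (qc q ^ (-2:ℤ) * lam - 1) • D.lzsdzs k l
        - (lam - 1) • D.zszsP k l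
    ∧ D.ract (D.dz k) (Zs N q l) =
        ((qc q)⁻¹ * lam) • D.SRlinv k l
        + (qc q ^ 2 * lam⁻¹ - 1) • D.lzdzs k l
        - (qc q ^ 2 * lam⁻¹ - 1) • D.zzsP k l
    ∧ D.ract (D.dzs k) (Z N q l) =
        (qc q * lam⁻¹) • D.SRright k l
        + (qc q ^ (-2:ℤ) * lam - 1) • D.lzsdz k l
        - (qc q ^ 2 * lam⁻¹ - 1) • D.zszP k l

/-- Structure equations of the calculus `Γ̃'_λ`. -/
def EqTp (D : PreCalc N q) (lam : ℂ) : Prop :=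
  ∀ k l : Fin N,
    D.ract (D.dz k) (Z N q l) =
        (qc q)⁻¹ • D.SRinv k l
        - (lam⁻¹ * (qc q ^ 4 * lam⁻¹ - 1)) • D.zzP k l
    ∧ D.ract (D.dzs k) (Zs N q l) =
        qc q • D.SRbar k l
        - (qc q ^ (-2:ℤ) * lam * (qc q ^ 4 * lam⁻¹ - 1)) • D.zszsP k l
    ∧ D.ract (D.dz k) (Zs N q l) =
        qc q • D.SRlinv k l
        + (qc q ^ 2 * lam⁻¹ - 1) • D.zzsP k l
    ∧ D.ract (D.dzs k) (Z N q l) =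
        (qc q)⁻¹ • D.SRright k l
        + (qc q ^ 2 * lam⁻¹ - 1) • D.zszP k l

/-- Structure equations of the calculus `Γ̃''_λ` (for `λ ∉ {0,∞}`). -/
def EqTpp (D : PreCalc N q) (lam : ℂ) : Prop :=
  ∀ k l : Fin N,
    D.ract (D.dz k) (Z N q l) = (qc q)⁻¹ • D.SRinv k l
    ∧ D.ract (D.dzs k) (Zs N q l) = qc q • D.SRbar k l
    ∧ D.ract (D.dz k) (Zs N q l) =
        qc q • D.SRlinv k l
        + (qc q ^ (-2:ℤ) * (sT N q)⁻¹ * (qc q ^ 4 * lam⁻¹ - 1)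
            * qc q ^ (2 * exZ k) * kdelta k l) • D.thP
        - ((sT N q)⁻¹ * (qc q ^ (2 * (N:ℤ) + 2) * lam⁻¹ - 1)) • D.zzsP k l
    ∧ D.ract (D.dzs k) (Z N q l) =
        (qc q)⁻¹ • D.SRright k l
        + (qc q ^ (-2:ℤ) * (sT N q)⁻¹ * (qc q ^ 4 * lam⁻¹ - 1) * kdelta k l) • D.thP
        - ((sT N q)⁻¹ * (qc q ^ (2 * (N:ℤ) + 2) * lam⁻¹ - 1)) • D.zszP k l

/-- Structure equations of the calculus `Γ̃°_λ`. -/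
def EqTo (D : PreCalc N q) (lam : ℂ) : Prop :=
  ∀ k l : Fin N,
    D.ract (D.dz k) (Z N q l) =
        (qc q * lam⁻¹) • D.SRinv k l
        + (qc q ^ 2 * lam⁻¹ - 1) • D.lzdz k l
        + (qc q ^ 2 * lam⁻¹ * (lam⁻¹ - 1)) • D.zzP k l
    ∧ D.ract (D.dzs k) (Zs N q l) =
        qc q • D.SRbar k l
        - (qc q ^ (-2:ℤ) * lam * (qc q ^ 4 * lam⁻¹ - 1)) • D.zszsP k l
    ∧ D.ract (D.dz k) (Zs N q l) = ((qc q)⁻¹ * lam) • D.SRlinv k l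
    ∧ D.ract (D.dzs k) (Z N q l) =
        (qc q)⁻¹ • D.SRright k l
        + (qc q ^ (-2:ℤ) * lam - 1) • D.lzsdz k l

/-- Structure equations of the calculus `Γ̃°°_λ`. -/
def EqToo (D : PreCalc N q) (lam : ℂ) : Prop :=
  ∀ k l : Fin N,
    D.ract (D.dz k) (Z N q l) =
        (qc q)⁻¹ • D.SRinv k l
        - (lam⁻¹ * (qc q ^ 4 * lam⁻¹ - 1)) • D.zzP k l
    ∧ D.ract (D.dzs k) (Zs N q l) =
        ((qc q)⁻¹ * lam) • D.SRbar k l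
        + (qc q ^ (-2:ℤ) * lam - 1) • D.lzsdzs k l
        - (lam - 1) • D.zszsP k l
    ∧ D.ract (D.dz k) (Zs N q l) =
        qc q • D.SRlinv k l
        + (qc q ^ 2 * lam⁻¹ - 1) • D.lzdzs k l
    ∧ D.ract (D.dzs k) (Z N q l) = (qc q * lam⁻¹) • D.SRright k l

end PreCalc

end QSphere

namespace QSphere

theorem qc_ne_zero {q : ℝ} (hq : q ≠ 0) : qc q ≠ 0 := Complex.ofReal_ne_zero.mpr hq

namespace PreCalc

variable {N : ℕ} {q : ℝ} {D : PreCalc N q}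

theorem IsFODC.lact_smul (hD : D.IsFODC) (c : ℂ) (x : X N q) (ω : D.Γ) :
    D.lact x (c • ω) = c • D.lact x ω :=
  hD.2.2.2.2.2.1 c x ω

theorem RelHolds.thM_eq {lam : ℂ} (h : D.RelHolds lam) (hlam : lam ≠ 0) :
    D.thM = (-lam⁻¹) • D.thP := by
  rw [neg_smul, eq_neg_iff_add_eq_zero, ← inv_smul_smul₀ hlam D.thM, ← smul_add, add_comm,
    show D.thP + lam • D.thM = 0 from h, smul_zero]

theorem RelHolds.lact_thM {lam : ℂ} (h : D.RelHolds lam) (hlam : lam ≠ 0) (hD : D.IsFODC)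
    (x : X N q) : D.lact x D.thM = (-lam⁻¹) • D.lact x D.thP := by
  rw [h.thM_eq hlam, hD.lact_smul]

end PreCalc

end QSphere

open QSphere in
theorem stmt16_general (N : ℕ) (q : ℝ) (hq : q ≠ -1 ∧ q ≠ 0 ∧ q ≠ 1)
    (ρ τ : ℝ) (hρ : ρ ≠ 0) (hτ : τ ≠ 0)
    (D : PreCalc N q) (hD : D.IsFODC) (hEq : D.EqPPP ρ τ)
    (hRel : D.RelHolds (qc q ^ 2 * ((τ:ℂ) / (ρ:ℂ)))) :
    D.EqTp (qc q ^ 2 * ((τ:ℂ) / (ρ:ℂ))) := by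
  have hq0 := qc_ne_zero hq.2.1
  have hρ0 : (ρ : ℂ) ≠ 0 := Complex.ofReal_ne_zero.mpr hρ
  have hτ0 : (τ : ℂ) ≠ 0 := Complex.ofReal_ne_zero.mpr hτ
  have hlam : qc q ^ 2 * ((τ:ℂ) / (ρ:ℂ)) ≠ 0 := by positivity
  have hM := hRel.lact_thM hlam hD
  intro k l
  obtain ⟨e1, e2, e3, e4⟩ := hEq k l
  refine ⟨?_, ?_, ?_, ?_⟩
  · rw [e1, PreCalc.zzM, hM, ← PreCalc.zzP]
    match_scalars <;> field_simp
    ring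
  · rw [e2, PreCalc.zszsM, hM, ← PreCalc.zszsP]
    match_scalars <;> field_simp
    ring
  · rw [e3, PreCalc.zzsM, hM, ← PreCalc.zzsP, hRel.thM_eq hlam]
    match_scalars <;> field_simp <;> ring
  · rw [e4, zpow_sub₀ hq0, PreCalc.zszM, hM, ← PreCalc.zszP, hRel.thM_eq hlam]
    match_scalars <;> field_simp <;> ring

open QSphere in
/-- factorising `Γ'''_{ρτ}` by the relation `θ₊ + q²(τ/ρ)θ₋ = 0`
yields the structure equations of `Γ̃'_λ` with `λ = q²τ/ρ`. -/
theorem stmt16 (N : ℕ) (hN : 2 ≤ N) (q : ℝ) (hq : q ≠ -1 ∧ q ≠ 0 ∧ q ≠ 1)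
    (ρ τ : ℝ) (hρ : ρ ≠ 0) (hτ : τ ≠ 0)
    (D : PreCalc N q) (hD : D.IsFODC) (hEq : D.EqPPP ρ τ)
    (hRel : D.RelHolds (qc q ^ 2 * ((τ:ℂ) / (ρ:ℂ)))) :
    D.EqTp (qc q ^ 2 * ((τ:ℂ) / (ρ:ℂ))) :=
  stmt16_general N q hq ρ τ hρ hτ D hD hEq hRel
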